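/- arXiv:1208.5129 — 8 statements merged into one kernel-verified Lean document; each statement's English description precedes it below -/
import Mathlib

section
/- Let M be a finite monoid with idempotent exponent ω. If M satisfies the identity (n*m)^ω * n = (n*m)^ω = m * (n*m)^ω for all m, n ∈ M, then M satisfies n^ω * m = n^ω = m * n^ω for all m, n ∈ M such that m is a (scattered) subword of n. -/
/-- `m` is a (scattered) subword of `n` in the monoid `M`:
`n = n₁ n₂ ⋯ n₂ₖ n₂ₖ₊₁` and `m = n₂ n₄ ⋯ n₂ₖ`. -/
def Subword {M : Type*} [Monoid M] (m n : M) : Prop :=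
  ∃ (ps : List (M × M)) (last : M),
    n = (ps.map fun p => p.1 * p.2).prod * last ∧ m = (ps.map Prod.snd).prod

theorem stmt_3 (M : Type*) [Monoid M] [Fintype M] (ω : ℕ) (hω : 0 < ω)
    (hid : ∀ x : M, IsIdempotentElem (x ^ ω))
    (hJ : ∀ m n : M, (n * m) ^ ω * n = (n * m) ^ ω ∧ m * (n * m) ^ ω = (n * m) ^ ω) :
    ∀ m n : M, Subword m n → n ^ ω * m = n ^ ω ∧ m * n ^ ω = n ^ ω := by
  rintro m n ⟨ps, last, hn, hm⟩
  -- `n^ω` absorbs any prefix of `n` on the right: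
  have hpre : ∀ p q : M, n = p * q → n ^ ω * p = n ^ ω := by
    intro p q h; rw [h]; exact (hJ q p).1
  -- `n^ω` absorbs any suffix of `n` on the left:
  have hsuf : ∀ p q : M, n = p * q → q * n ^ ω = n ^ ω := by
    intro p q h; rw [h]; exact (hJ q p).2
  -- `n^ω` absorbs any middle factor of `n` on either side:
  have hmidR : ∀ u b v : M, n = u * (b * v) → n ^ ω * b = n ^ ω := by
    intro u b v h
    have h1 : n ^ ω * u = n ^ ω := hpre u (b * v) h
    have h2 : n ^ ω * (u * b) = n ^ ω := hpre (u * b) v (by rw [h, mul_assoc])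
    calc n ^ ω * b = n ^ ω * u * b := by rw [h1]
      _ = n ^ ω := by rw [mul_assoc]; exact h2
  have hmidL : ∀ u b v : M, n = u * (b * v) → b * n ^ ω = n ^ ω := by
    intro u b v h
    have h1 : v * n ^ ω = n ^ ω := hsuf (u * b) v (by rw [h, mul_assoc])
    have h2 : (b * v) * n ^ ω = n ^ ω := hsuf u (b * v) h
    calc b * n ^ ω = b * (v * n ^ ω) := by rw [h1]
      _ = n ^ ω := by rw [← mul_assoc]; exact h2
  -- main induction over the decomposition list
  have main : ∀ (l : List (M × M)) (u v : M),
      n = u * ((l.map fun p => p.1 * p.2).prod * v) →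
      n ^ ω * (l.map Prod.snd).prod = n ^ ω ∧
      (l.map Prod.snd).prod * n ^ ω = n ^ ω := by
    intro l
    induction l with
    | nil => intro u v h; simp
    | cons hd t ih =>
      intro u v h
      simp only [List.map_cons, List.prod_cons] at h ⊢
      have h' : n = (u * hd.1) * (hd.2 * ((t.map fun p => p.1 * p.2).prod * v)) := by
        rw [h]; rw [mul_assoc, mul_assoc, mul_assoc]
      have hb : n ^ ω * hd.2 = n ^ ω := hmidR _ _ _ h'
      have hb' : hd.2 * n ^ ω = n ^ ω := hmidL _ _ _ h'
      have ht := ih (u * hd.1 * hd.2) v (by rw [h', ← mul_assoc])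
      constructor
      · rw [← mul_assoc, hb, ht.1]
      · rw [mul_assoc, ht.2, hb']
  rw [hm]
  exact main ps 1 last (by rw [hn, one_mul])
end

section
/- Let M be a finite monoid with idempotent exponent ω. M satisfies (n*m)^ω * n = (n*m)^ω = m * (n*m)^ω for all m, n ∈ M if and only if M satisfies n^ω * m = n^ω = m * n^ω for all m ⊑ n. -/
section

variable {M : Type*} [Monoid M]

def absorbedBy (e : M) : Submonoid M where
  carrier := {b | e * b = e ∧ b * e = e}
  one_mem' := ⟨mul_one e, one_mul e⟩
  mul_mem' := by
    rintro a b ⟨hea, hae⟩ ⟨heb, hbe⟩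
    exact ⟨by rw [← mul_assoc, hea, heb], by rw [mul_assoc, hbe, hae]⟩

theorem mem_absorbedBy {e b : M} : b ∈ absorbedBy e ↔ e * b = e ∧ b * e = e := Iff.rfl

theorem mem_absorbedBy_of_eq_mul_mul {e x a b c : M}
    (habs : ∀ u v, x = u * v → e * u = e ∧ v * e = e) (hx : x = a * b * c) :
    b ∈ absorbedBy e := by
  constructor
  · calc e * b = e * a * b := by rw [(habs a (b * c) (by rw [hx, mul_assoc])).1]
      _ = e := by rw [mul_assoc, (habs (a * b) c hx).1]
  · calc b * e = b * (c * e) := by rw [(habs (a * b) c hx).2]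
      _ = e := by rw [← mul_assoc, (habs a (b * c) (by rw [hx, mul_assoc])).2]

theorem Subword.exists_list_prod {m n : M} (h : Subword m n) :
    ∃ l : List M, l.prod = m ∧ ∀ b ∈ l, ∃ a c, n = a * b * c := by
  obtain ⟨ps, last, hn, rfl⟩ := h
  refine ⟨ps.map Prod.snd, rfl, ?_⟩
  simp only [List.mem_map]
  rintro _ ⟨p, hp, rfl⟩
  obtain ⟨s, t, rfl⟩ := List.append_of_mem hp
  refine ⟨(s.map fun q => q.1 * q.2).prod * p.1, (t.map fun q => q.1 * q.2).prod * last, ?_⟩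
  simp [hn, List.prod_append, mul_assoc]

theorem subword_mul_mul (a b c : M) : Subword b (a * b * c) :=
  ⟨[(a, b)], c, by simp⟩

end

theorem stmt_4_general (M : Type*) [Monoid M] (ω : ℕ) :
    (∀ m n : M, (n * m) ^ ω * n = (n * m) ^ ω ∧ m * (n * m) ^ ω = (n * m) ^ ω) ↔
    (∀ m n : M, Subword m n → n ^ ω * m = n ^ ω ∧ m * n ^ ω = n ^ ω) := by
  constructor
  · intro hA m n hmn
    have habs : ∀ u v, n = u * v → n ^ ω * u = n ^ ω ∧ v * n ^ ω = n ^ ω := by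
      rintro u v rfl
      exact hA v u
    obtain ⟨l, rfl, hl⟩ := hmn.exists_list_prod
    refine (mem_absorbedBy (e := n ^ ω)).1 (Submonoid.list_prod_mem _ fun b hb => ?_)
    obtain ⟨a, c, hx⟩ := hl b hb
    exact mem_absorbedBy_of_eq_mul_mul habs hx
  · intro hS m n
    exact ⟨(hS n (n * m) (by simpa using subword_mul_mul 1 n m)).1,
      (hS m (n * m) (by simpa using subword_mul_mul n m 1)).2⟩

theorem stmt_4 (M : Type*) [Monoid M] [Fintype M] (ω : ℕ) (hω : 0 < ω)
    (hid : ∀ x : M, IsIdempotentElem (x ^ ω)) :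
    (∀ m n : M, (n * m) ^ ω * n = (n * m) ^ ω ∧ m * (n * m) ^ ω = (n * m) ^ ω) ↔
    (∀ m n : M, Subword m n → n ^ ω * m = n ^ ω ∧ m * n ^ ω = n ^ ω) :=
  stmt_4_general M ω
end

section
/- Let A be a finite alphabet and define the (scattered, order-preserving) subword relation on words over A: u ≼ w if u embeds into w by a strictly increasing map of positions preserving letters. For every n there exists k such that: if two words u, w over A have the same set of subwords of length at most k, then they have a common subword t with t ≼ u, t ≼ w, and t has the same subwords of length at most n as both u and w. -/
/-- The set of subwords (subsequences) of `w` of length at most `n`. -/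
def Pieces {A : Type*} (n : ℕ) (w : List A) : Set (List A) :=
  {t | t.Sublist w ∧ t.length ≤ n}

lemma pieces_mono {A : Type*} {n : ℕ} {u w : List A} (h : u.Sublist w) :
    Pieces n u ⊆ Pieces n w := fun t ht => ⟨ht.1.trans h, ht.2⟩

lemma pieces_finite {A : Type*} [Fintype A] (n : ℕ) (w : List A) :
    (Pieces n w).Finite :=
  (List.finite_length_le A n).subset (fun _ ht => ht.2)

/-- Key lemma: every word has a short subword with the same `n`-pieces. -/
lemma exists_short {A : Type*} [Fintype A] (n : ℕ) (u : List A) :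
    ∃ t : List A, t.Sublist u ∧
      t.length ≤ ({l : List A | l.length ≤ n}).ncard ∧ Pieces n t = Pieces n u := by
  set K := ({l : List A | l.length ≤ n}).ncard with hK
  obtain ⟨m, hm⟩ : ∃ m, u.length ≤ m := ⟨u.length, le_rfl⟩
  induction m generalizing u with
  | zero =>
    exact ⟨u, List.Sublist.refl u, by omega, rfl⟩
  | succ m ih =>
    by_cases hlen : u.length ≤ K
    · exact ⟨u, List.Sublist.refl u, hlen, rfl⟩
    · push_neg at hlen
      have hfin : ({l : List A | l.length ≤ n}).Finite := List.finite_length_le A n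
      by_cases hstep : ∃ i < u.length, Pieces n (u.take i) = Pieces n (u.take (i+1))
      · obtain ⟨i, hi, heq⟩ := hstep
        set u' := u.take i ++ u.drop (i+1) with hu'
        have h1 : (u.take i).Sublist (u.take (i+1)) := by
          have := List.take_sublist i (u.take (i+1))
          rwa [List.take_take, min_eq_left (by omega)] at this
        have hsub : u'.Sublist u := by
          have h2 : u'.Sublist (u.take (i+1) ++ u.drop (i+1)) :=
            h1.append (List.Sublist.refl _)
          rwa [List.take_append_drop] at h2
        have hlen' : u'.length ≤ m := by
          have : u'.length = i + (u.length - (i+1)) := by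
            simp [hu', List.length_take, List.length_drop, min_eq_left hi.le]
          omega
        have hPeq : Pieces n u' = Pieces n u := by
          apply Set.Subset.antisymm (pieces_mono hsub)
          rintro s ⟨hs, hsn⟩
          rw [← List.take_append_drop (i+1) u] at hs
          obtain ⟨s₁, s₂, rfl, hs₁, hs₂⟩ := List.sublist_append_iff.mp hs
          have hs₁' : s₁ ∈ Pieces n (u.take (i+1)) :=
            ⟨hs₁, le_trans (by simp) hsn⟩
          rw [← heq] at hs₁'
          exact ⟨hs₁'.1.append hs₂, hsn⟩
        obtain ⟨t, ht1, ht2, ht3⟩ := ih u' hlen'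
        exact ⟨t, ht1.trans hsub, ht2, ht3.trans hPeq⟩
      · exfalso
        push_neg at hstep
        have key : ∀ i, i ≤ u.length → i < (Pieces n (u.take i)).ncard := by
          intro i
          induction i with
          | zero =>
            intro _
            refine Set.ncard_pos (pieces_finite n _) |>.mpr ?_
            exact ⟨[], List.nil_sublist _, Nat.zero_le n⟩
          | succ i ihh =>
            intro hi
            have hss : Pieces n (u.take i) ⊂ Pieces n (u.take (i+1)) := by
              refine (pieces_mono ?_).ssubset_of_ne (hstep i (by omega))
              have := List.take_sublist i (u.take (i+1))
              rwa [List.take_take, min_eq_left (by omega)] at this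
            have := Set.ncard_lt_ncard hss (pieces_finite n _)
            have := ihh (by omega)
            omega
        have h1 := key u.length le_rfl
        rw [List.take_length] at h1
        have h2 : (Pieces n u).ncard ≤ K :=
          Set.ncard_le_ncard (fun t ht => ht.2) hfin
        omega

theorem stmt_9 (A : Type*) [Fintype A] (n : ℕ) :
    ∃ k : ℕ, ∀ u w : List A, Pieces k u = Pieces k w →
      ∃ t : List A, t.Sublist u ∧ t.Sublist w ∧
        Pieces n t = Pieces n u ∧ Pieces n t = Pieces n w := by
  set K := ({l : List A | l.length ≤ n}).ncard with hK
  refine ⟨n + K, fun u w huw => ?_⟩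
  obtain ⟨t, htu, htK, htP⟩ := exists_short n u
  have htw : t.Sublist w := by
    have : t ∈ Pieces (n + K) u := ⟨htu, by omega⟩
    rw [huw] at this
    exact this.1
  have hPuw : Pieces n u = Pieces n w := by
    ext s
    constructor
    · rintro ⟨hs, hsn⟩
      have : s ∈ Pieces (n + K) u := ⟨hs, by omega⟩
      rw [huw] at this
      exact ⟨this.1, hsn⟩
    · rintro ⟨hs, hsn⟩
      have : s ∈ Pieces (n + K) w := ⟨hs, by omega⟩
      rw [← huw] at this
      exact ⟨this.1, hsn⟩
  exact ⟨t, htu, htw, htP, htP.trans hPuw⟩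
end

section
/- Let α : A* → M be a monoid morphism onto a finite monoid M. There is a constant k (depending only on |M|) such that every word w over A has a subword (subsequence) t of length at most k with α(t) = α(w). -/
theorem aux_cut (A : Type*) (M : Type*) [Monoid M] [Fintype M]
    (α : List A → M)
    (hmul : ∀ x y : List A, α (x ++ y) = α x * α y)
    (w : List A) (hw : Fintype.card M < w.length) :
    ∃ w' : List A, w'.Sublist w ∧ w'.length < w.length ∧ α w' = α w := by
  obtain ⟨a, b, hab, heq⟩ := Fintype.exists_ne_map_eq_of_card_lt
    (fun i : Fin (Fintype.card M + 1) => α (w.take i)) (by simp)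
  wlog hlt : (a : ℕ) < (b : ℕ) generalizing a b
  · refine this b a hab.symm heq.symm ?_
    have : (a : ℕ) ≠ (b : ℕ) := fun h => hab (Fin.ext h)
    omega
  · set i := (a : ℕ); set j := (b : ℕ)
    have hj : j ≤ w.length := by have := b.is_lt; omega
    refine ⟨w.take i ++ w.drop j, ?_, ?_, ?_⟩
    · have h1 : (w.take i).Sublist (w.take j) := by
        have := List.take_sublist i (w.take j)
        rwa [List.take_take, min_eq_left (le_of_lt hlt)] at this
      have := List.Sublist.append h1 (List.Sublist.refl (w.drop j))
      rwa [List.take_append_drop] at this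
    · simp only [List.length_append, List.length_take, List.length_drop]
      omega
    · calc α (w.take i ++ w.drop j) = α (w.take i) * α (w.drop j) := hmul _ _
        _ = α (w.take j) * α (w.drop j) := by rw [heq]
        _ = α w := by rw [← hmul, List.take_append_drop]

theorem stmt_10 (A : Type*) [Fintype A] (M : Type*) [Monoid M] [Fintype M]
    (α : List A → M) (hone : α [] = 1)
    (hmul : ∀ x y : List A, α (x ++ y) = α x * α y)
    (hsurj : Function.Surjective α) :
    ∃ k : ℕ, ∀ w : List A, ∃ t : List A,
      t.Sublist w ∧ t.length ≤ k ∧ α t = α w := by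
  refine ⟨Fintype.card M, fun w => ?_⟩
  generalize hind : w.length = n
  induction n using Nat.strong_induction_on generalizing w with
  | _ n ih =>
    subst hind
    by_cases h : w.length ≤ Fintype.card M
    · exact ⟨w, List.Sublist.refl w, h, rfl⟩
    · obtain ⟨w', hsub, hlen, heq⟩ := aux_cut A M α hmul w (by omega)
      obtain ⟨t, ht1, ht2, ht3⟩ := ih w'.length hlen w' rfl
      exact ⟨t, ht1.trans hsub, ht2, ht3.trans heq⟩
end

section
/- In a finite J-trivial monoid M with idempotent exponent ω, for all u_0, v, u_1 ∈ M: (u_0 * v * u_1)^ω * v = (u_0 * v * u_1)^ω. -/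
def JTrivial (M : Type*) [Monoid M] : Prop :=
  ∀ m m' : M, {z : M | ∃ x y : M, z = x * m * y} = {z : M | ∃ x y : M, z = x * m' * y} → m = m'

theorem stmt_12 (M : Type*) [Monoid M] [Fintype M] (hJ : JTrivial M)
    (ω : ℕ) (hω : 0 < ω) (hid : ∀ x : M, IsIdempotentElem (x ^ ω))
    (u₀ v u₁ : M) :
    (u₀ * v * u₁) ^ ω * v = (u₀ * v * u₁) ^ ω := by
  have key : ∀ x y : M, (x * y) ^ ω * x = (x * y) ^ ω := by
    intro x y
    set e := (x * y) ^ ω with he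
    have hee : e * e = e := hid (x * y)
    obtain ⟨n, hn⟩ : ∃ n, ω = n + 1 := ⟨ω - 1, (Nat.succ_pred_eq_of_pos hω).symm⟩
    have hdecomp : e * e = (e * x) * (y * (x * y) ^ n) := by
      calc e * e = e * ((x * y) * (x * y) ^ n) := by rw [he, hn, pow_succ']
        _ = (e * x) * (y * (x * y) ^ n) := by simp [mul_assoc]
    have := hJ (e * x) e ?_
    · exact this
    ext z
    simp only [Set.mem_setOf_eq]
    constructor
    · rintro ⟨a, b, rfl⟩
      exact ⟨a, x * b, by simp [mul_assoc]⟩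
    · rintro ⟨a, b, rfl⟩
      have hE : e = e * x * (y * (x * y) ^ n) := by rw [← hdecomp, hee]
      refine ⟨a, y * (x * y) ^ n * b, ?_⟩
      conv_lhs => rw [hE]
      simp [mul_assoc]
  have h1 : (u₀ * v * u₁) ^ ω * u₀ = (u₀ * v * u₁) ^ ω := by
    have := key u₀ (v * u₁)
    rwa [← mul_assoc] at this
  have h2 : (u₀ * v * u₁) ^ ω * (u₀ * v) = (u₀ * v * u₁) ^ ω := key (u₀ * v) u₁
  calc (u₀ * v * u₁) ^ ω * v = (u₀ * v * u₁) ^ ω * u₀ * v := by rw [h1]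
    _ = (u₀ * v * u₁) ^ ω * (u₀ * v) := by rw [mul_assoc]
    _ = (u₀ * v * u₁) ^ ω := h2
end

section
/- A word language L over a finite alphabet A is closed under insertion of letters (i.e., x·y ∈ L implies x·a·y ∈ L for all words x, y and letters a) if and only if L is a finite union of languages of the form {w : u ≼ w} for words u. -/
/-!
An insertion-closed language is upward closed for the subword order, so it is generated by its
subword-minimal words. These form an antichain, hence are finitely many by Higman's lemma.
-/

namespace List

variable {A : Type*}

theorem sublistForall₂_eq_iff_sublist {l₁ l₂ : List A} :
    SublistForall₂ (· = ·) l₁ l₂ ↔ l₁ <+ l₂ := by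
  simp [sublistForall₂_iff]

theorem finite_of_isAntichain_sublist [Finite A] {S : Set (List A)}
    (hS : IsAntichain Sublist S) : S.Finite := by
  have higman := Set.finite_univ.partiallyWellOrderedOn.partiallyWellOrderedOn_sublistForall₂
    (· = · : A → A → Prop)
  refine IsAntichain.finite_of_partiallyWellOrderedOn (r := SublistForall₂ (· = ·)) ?_
    (higman.mono fun _ _ x _ => Set.mem_univ x)
  exact fun u hu v hv huv h => hS hu hv huv (sublistForall₂_eq_iff_sublist.mp h)

end List

section Subword

open List

variable {A : Type*}

def IsInsertionClosed (L : Set (List A)) : Prop :=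
  ∀ (x y : List A) (a : A), x ++ y ∈ L → x ++ [a] ++ y ∈ L

def upwardClosure (U : Set (List A)) : Set (List A) :=
  {w | ∃ u ∈ U, u <+ w}

def subwordMinimal (L : Set (List A)) : Set (List A) :=
  {u | u ∈ L ∧ ∀ v ∈ L, v <+ u → v = u}

theorem finite_subwordMinimal [Finite A] (L : Set (List A)) : (subwordMinimal L).Finite :=
  finite_of_isAntichain_sublist fun u hu _ hv huv h => huv (hv.2 u hu.1 h)

theorem exists_subwordMinimal_sublist {L : Set (List A)} {w : List A} (hw : w ∈ L) :
    ∃ u ∈ subwordMinimal L, u <+ w := by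
  obtain ⟨u, ⟨huL, huw⟩, hu⟩ :=
    (measure length).wf.has_min {v | v ∈ L ∧ v <+ w} ⟨w, hw, Sublist.refl w⟩
  refine ⟨u, ⟨huL, fun v hvL hvu => hvu.eq_of_length_le ?_⟩, huw⟩
  exact not_lt.mp (hu v ⟨hvL, hvu.trans huw⟩)

theorem IsInsertionClosed.mem_of_sublist {L : Set (List A)} (hL : IsInsertionClosed L)
    {u w : List A} (huw : u <+ w) (hu : u ∈ L) : w ∈ L := by
  suffices ∀ p, p ++ u ∈ L → p ++ w ∈ L by simpa using this [] hu
  clear hu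
  induction huw with
  | slnil => exact fun _ => id
  | cons a _ ih => exact fun p hp => by simpa using hL p _ a (ih p hp)
  | cons_cons a _ ih => exact fun p hp => by simpa using ih (p ++ [a]) (by simpa using hp)

theorem IsInsertionClosed.eq_upwardClosure_subwordMinimal {L : Set (List A)}
    (hL : IsInsertionClosed L) : L = upwardClosure (subwordMinimal L) := by
  ext w
  refine ⟨exists_subwordMinimal_sublist, ?_⟩
  rintro ⟨u, hu, huw⟩
  exact hL.mem_of_sublist huw hu.1

theorem isInsertionClosed_upwardClosure (U : Set (List A)) :
    IsInsertionClosed (upwardClosure U) := by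
  rintro x y a ⟨u, hu, huxy⟩
  exact ⟨u, hu, huxy.trans (by simp)⟩

end Subword

theorem stmt_16_general (A : Type*) [Fintype A] (L : Set (List A)) :
    (∀ (x y : List A) (a : A), (x ++ y) ∈ L → (x ++ [a] ++ y) ∈ L) ↔
    (∃ U : Finset (List A), L = {w : List A | ∃ u ∈ U, u.Sublist w}) := by
  change IsInsertionClosed L ↔ ∃ U : Finset (List A), L = upwardClosure (U : Set (List A))
  constructor
  · intro hL
    refine ⟨(finite_subwordMinimal L).toFinset, ?_⟩
    rw [Set.Finite.coe_toFinset]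
    exact hL.eq_upwardClosure_subwordMinimal
  · rintro ⟨U, rfl⟩
    exact isInsertionClosed_upwardClosure _

theorem stmt_16 (A : Type*) [Fintype A] (L : Set (List A))
    (M : Type*) [Monoid M] [Fintype M]
    (α : List A → M) (hone : α [] = 1)
    (hmul : ∀ x y : List A, α (x ++ y) = α x * α y)
    (X : Set M) (hrec : L = α ⁻¹' X) :
    (∀ (x y : List A) (a : A), (x ++ y) ∈ L → (x ++ [a] ++ y) ∈ L) ↔
    (∃ U : Finset (List A), L = {w : List A | ∃ u ∈ U, u.Sublist w}) :=
  stmt_16_general A L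
end

section
/- Let M be a finite monoid with idempotent exponent ω satisfying m * n^ω = n^ω = n^ω * m whenever m ⊑ n. Then for every n ∈ M and every factorization n = n_1 * ... * n_r, and every subset S ⊆ {1,...,r}, the product of (n_i for i ∈ S, in increasing order of i) m satisfies n^ω * m = n^ω. -/
namespace Subword

variable {M : Type*} [Monoid M]

theorem one_left (n : M) : Subword 1 n :=
  ⟨[], n, by simp, by simp⟩

/-- The extra letter is absorbed into the first gap, or into `last` if there is no gap. -/
theorem mul_right_of_left {m n : M} (a : M) : Subword m n → Subword m (a * n) := by
  rintro ⟨_ | ⟨p, ps⟩, last, rfl, rfl⟩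
  · exact ⟨[], a * last, by simp, by simp⟩
  · exact ⟨(a * p.1, p.2) :: ps, last, by simp [mul_assoc], by simp⟩

theorem mul_mul_left {m n : M} (a : M) : Subword m n → Subword (a * m) (a * n) := by
  rintro ⟨ps, last, rfl, rfl⟩
  exact ⟨(1, a) :: ps, last, by simp [mul_assoc], by simp⟩

end Subword

theorem List.Sublist.subword_prod {M : Type*} [Monoid M] {ms ns : List M} (h : ms.Sublist ns) :
    Subword ms.prod ns.prod := by
  induction h with
  | slnil => exact Subword.one_left 1
  | cons a _ ih => simpa using ih.mul_right_of_left a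
  | cons_cons a _ ih => simpa using ih.mul_mul_left a

theorem stmt_18_general (M : Type*) [Monoid M] (ω : ℕ)
    (hyp : ∀ m n : M, Subword m n → m * n ^ ω = n ^ ω ∧ n ^ ω * m = n ^ ω) :
    ∀ (ns ms : List M), ms.Sublist ns →
      ns.prod ^ ω * ms.prod = ns.prod ^ ω :=
  fun _ _ h => (hyp _ _ h.subword_prod).2

theorem stmt_18 (M : Type*) [Monoid M] [Fintype M] (ω : ℕ) (hω : 0 < ω)
    (hid : ∀ x : M, IsIdempotentElem (x ^ ω))
    (hyp : ∀ m n : M, Subword m n → m * n ^ ω = n ^ ω ∧ n ^ ω * m = n ^ ω) :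
    ∀ (ns ms : List M), ms.Sublist ns →
      ns.prod ^ ω * ms.prod = ns.prod ^ ω :=
  stmt_18_general M ω hyp
end

section
/- Let M be a finite monoid satisfying n^ω * m = n^ω = m * n^ω for all m ⊑ n (subword relation). Then M is J-trivial. -/
private lemma subword_left {M : Type*} [Monoid M] (x u : M) : Subword x (u * x) :=
  ⟨[(u, x)], 1, by simp, by simp⟩

private lemma subword_right {M : Type*} [Monoid M] (y v : M) : Subword y (y * v) :=
  ⟨[(1, y)], v, by simp, by simp⟩

private lemma sandwich_pow {M : Type*} [Monoid M] {a b m : M} (h : m = a * m * b) :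
    ∀ k : ℕ, m = a ^ k * m * b ^ k := by
  intro k
  induction k with
  | zero => simp
  | succ k ih =>
    calc m = a * m * b := h
    _ = a * (a ^ k * m * b ^ k) * b := by rw [← ih]
    _ = a ^ (k + 1) * m * b ^ (k + 1) := by
        rw [pow_succ', pow_succ]
        simp [mul_assoc]

theorem stmt_19 (M : Type*) [Monoid M] [Fintype M] (ω : ℕ) (hω : 0 < ω)
    (hid : ∀ x : M, IsIdempotentElem (x ^ ω))
    (hyp : ∀ m n : M, Subword m n → n ^ ω * m = n ^ ω ∧ m * n ^ ω = n ^ ω) :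
    JTrivial M := by
  intro m m' hset
  -- m' ∈ RHS set, so m' ∈ LHS set
  have hm' : ∃ u v : M, m' = u * m * v := by
    have : m' ∈ {z : M | ∃ x y : M, z = x * m' * y} := ⟨1, 1, by simp⟩
    rw [← hset] at this
    exact this
  have hm : ∃ x y : M, m = x * m' * y := by
    have : m ∈ {z : M | ∃ x y : M, z = x * m * y} := ⟨1, 1, by simp⟩
    rw [hset] at this
    exact this
  obtain ⟨u, v, hm'⟩ := hm'
  obtain ⟨x, y, hm⟩ := hm
  have h1 : m' = (u * x) * m' * (y * v) := by
    calc m' = u * m * v := hm'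
    _ = u * (x * m' * y) * v := by rw [hm]
    _ = (u * x) * m' * (y * v) := by simp [mul_assoc]
  have h2 : m' = (u * x) ^ ω * m' * (y * v) ^ ω := sandwich_pow h1 ω
  have hx : x * (u * x) ^ ω = (u * x) ^ ω := (hyp x (u * x) (subword_left x u)).2
  have hy : (y * v) ^ ω * y = (y * v) ^ ω := (hyp y (y * v) (subword_right y v)).1
  calc m = x * m' * y := hm
  _ = x * ((u * x) ^ ω * m' * (y * v) ^ ω) * y := by rw [← h2]
  _ = (x * (u * x) ^ ω) * m' * ((y * v) ^ ω * y) := by simp [mul_assoc]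
  _ = (u * x) ^ ω * m' * (y * v) ^ ω := by rw [hx, hy]
  _ = m' := h2.symm
end
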